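/- Let u and v be freely reduced words in the letters A ∪ A^{-1}, and let w be the unique reduced word representing the element uv of the free group F_g. Then |w|_{g+1}^{simple} ≤ |u|_{g+1}^{simple} + |v|_{g+1}^{simple} + 1. -/

import Mathlib

/-- A letter of the alphabet `A ∪ A⁻¹`: a generator index together with a sign. -/
abbrev Letter (g : ℕ) := Fin g × Bool

/-- The formal inverse of a letter. -/
def Letter.inv {g : ℕ} (a : Letter g) : Letter g := (a.1, !a.2)

/-- A word is (freely) reduced if it equals its free reduction. -/
def IsReducedWord {g : ℕ} (w : List (Letter g)) : Prop :=
  FreeGroup.reduce w = w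

/-- The Whitehead graph of a word `x`: vertices are the letters `A ∪ A⁻¹`, and each
pair of consecutive letters `a b` occurring in `x` contributes an edge from `a` to `b⁻¹`. -/
def whiteheadGraph (g : ℕ) (x : List (Letter g)) : SimpleGraph (Letter g) where
  Adj u v := u ≠ v ∧ ([u, Letter.inv v] <:+: x ∨ [v, Letter.inv u] <:+: x)
  symm := by
    constructor
    intro u v h
    exact ⟨Ne.symm h.1, h.2.symm⟩
  loopless := by
    constructor
    intro u h
    exact h.1 rfl

/-- A graph has a cut vertex if it is disconnected, or some vertex can be removed to
disconnect it. -/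
def HasCutVertex {V : Type*} (G : SimpleGraph V) : Prop :=
  ¬ G.Connected ∨ ∃ v : V, ¬ (G.induce {u | u ≠ v}).Connected

/-- The simple `(g+1)`-length of a reduced word `w`: it is `0` if the Whitehead graph of
`w` has a cut vertex, and otherwise the greatest `t` such that `w` is a concatenation of
`t` subwords each of whose Whitehead graphs has no cut vertex. -/
noncomputable def simpleLength (g : ℕ) (w : List (Letter g)) : ℕ :=
  letI := Classical.propDecidable (HasCutVertex (whiteheadGraph g w))
  if HasCutVertex (whiteheadGraph g w) then 0
  else sSup {t : ℕ | ∃ ws : List (List (Letter g)),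
    ws.length = t ∧ ws.flatten = w ∧
    ∀ u ∈ ws, ¬ HasCutVertex (whiteheadGraph g u)}

/-!
Since `u` and `v` are reduced, freely reducing `uv` only cancels a suffix of `u` against a prefix
of `v`, so `w = u₁ v₁` with `u₁` a prefix of `u` and `v₁` a suffix of `v`. In a decomposition of
`w` into pieces whose Whitehead graphs have no cut vertex, every piece except the one straddling
the junction lies inside `u₁` or inside `v₁`. A superword of a cut-vertex-free word is again
cut-vertex-free, because its Whitehead graph only gains edges; so the pieces inside `u₁` can be
stretched to a decomposition of `u`, and those inside `v₁` to one of `v`.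
-/

namespace FreeGroup

variable {α : Type*} [DecidableEq α]

theorem IsReduced.exists_reduce_append_eq {u v : List (α × Bool)} (hu : IsReduced u)
    (hv : IsReduced v) : ∃ u₁ v₁, u₁ <+: u ∧ v₁ <:+ v ∧ reduce (u ++ v) = u₁ ++ v₁ := by
  induction u with
  | nil => exact ⟨[], v, List.nil_prefix, List.suffix_refl v, hv.reduce_eq⟩
  | cons a u ih =>
    obtain ⟨u₁, v₁, hu₁, hv₁, hred⟩ := ih (hu.infix (List.suffix_cons a u).isInfix)
    rw [List.cons_append, reduce.cons, hred]
    cases u₁ with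
    | nil =>
      cases v₁ with
      | nil => exact ⟨[a], [], ⟨u, rfl⟩, List.nil_suffix, rfl⟩
      | cons c t =>
        by_cases hc : a.1 = c.1 ∧ a.2 = !c.2
        · exact ⟨[], t, List.nil_prefix, (List.suffix_cons c t).trans hv₁, by simp [hc]⟩
        · exact ⟨[a], c :: t, ⟨u, rfl⟩, hv₁, by simp [hc]⟩
    | cons b r =>
      obtain ⟨s, rfl⟩ := hu₁
      have hab : ¬ (a.1 = b.1 ∧ a.2 = !b.2) := by
        rintro ⟨h₁, h₂⟩
        simpa [h₂] using (isReduced_cons_cons.mp hu).1 h₁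
      exact ⟨a :: b :: r, v₁, ⟨s, rfl⟩, hv₁, by simp [hab]⟩

end FreeGroup

namespace List

variable {α : Type*}

theorem exists_take_flatten_prefix_drop_flatten_suffix {ws : List (List α)} {a b : List α}
    (h : ws.flatten = a ++ b) :
    ∃ i, (ws.take i).flatten <+: a ∧ (ws.drop (i + 1)).flatten <:+ b := by
  induction ws generalizing a with
  | nil => exact ⟨0, nil_prefix, nil_suffix⟩
  | cons m ws ih =>
    rw [flatten_cons] at h
    rcases append_eq_append_iff.mp h with ⟨r, rfl, hr⟩ | ⟨c, -, rfl⟩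
    · obtain ⟨i, hpre, hsuf⟩ := ih hr
      exact ⟨i + 1, by simpa using hpre, by simpa using hsuf⟩
    · exact ⟨0, nil_prefix, by simp⟩

theorem exists_flatten_eq_of_flatten_prefix {ws : List (List α)} {w : List α}
    (hws : ws.flatten <+: w) (hne : ws ≠ []) :
    ∃ ws' : List (List α),
      ws'.length = ws.length ∧ ws'.flatten = w ∧ ∀ y ∈ ws', ∃ x ∈ ws, x <:+: y := by
  obtain ⟨init, last, rfl⟩ := (eq_nil_or_concat' ws).resolve_left hne
  obtain ⟨s, rfl⟩ := hws
  refine ⟨init ++ [last ++ s], by simp, by simp, fun y hy => ?_⟩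
  rcases mem_append.mp hy with hy | hy
  · exact ⟨y, mem_append_left _ hy, infix_refl y⟩
  · rw [mem_singleton.mp hy]
    exact ⟨last, by simp, (prefix_append last s).isInfix⟩

theorem exists_flatten_eq_of_flatten_suffix {ws : List (List α)} {w : List α}
    (hws : ws.flatten <:+ w) (hne : ws ≠ []) :
    ∃ ws' : List (List α),
      ws'.length = ws.length ∧ ws'.flatten = w ∧ ∀ y ∈ ws', ∃ x ∈ ws, x <:+: y := by
  obtain ⟨hd, tl, rfl⟩ := exists_cons_of_ne_nil hne
  obtain ⟨s, rfl⟩ := hws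
  refine ⟨(s ++ hd) :: tl, rfl, by simp, fun y hy => ?_⟩
  rcases mem_cons.mp hy with rfl | hy
  · exact ⟨hd, mem_cons_self, (suffix_append s hd).isInfix⟩
  · exact ⟨y, mem_cons_of_mem _ hy, infix_refl y⟩

theorem exists_flatten_eq_of_flatten_infix {ws : List (List α)} {w : List α}
    (hws : ws.flatten <:+: w) (hne : ws ≠ []) :
    ∃ ws' : List (List α),
      ws'.length = ws.length ∧ ws'.flatten = w ∧ ∀ y ∈ ws', ∃ x ∈ ws, x <:+: y := by
  obtain ⟨t, hpre, hsuf⟩ := infix_iff_prefix_suffix.mp hws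
  obtain ⟨ws₁, hlen₁, rfl, hws₁⟩ := exists_flatten_eq_of_flatten_prefix hpre hne
  obtain ⟨ws₂, hlen₂, hflat₂, hws₂⟩ :=
    exists_flatten_eq_of_flatten_suffix hsuf (length_pos_iff.mp (hlen₁ ▸ length_pos_iff.mpr hne))
  refine ⟨ws₂, hlen₂.trans hlen₁, hflat₂, fun z hz => ?_⟩
  obtain ⟨y, hy, hyz⟩ := hws₂ z hz
  obtain ⟨x, hx, hxy⟩ := hws₁ y hy
  exact ⟨x, hx, hxy.trans hyz⟩

theorem length_le_length_flatten {ws : List (List α)} (hws : ∀ x ∈ ws, x ≠ []) :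
    ws.length ≤ ws.flatten.length := by
  rw [length_flatten, ← length_map length]
  refine length_le_sum_of_one_le _ fun n hn => ?_
  obtain ⟨x, hx, rfl⟩ := mem_map.mp hn
  exact length_pos_of_ne_nil (hws x hx)

end List

section Whitehead

variable {g : ℕ}

theorem whiteheadGraph_mono {x y : List (Letter g)} (h : x <:+: y) :
    whiteheadGraph g x ≤ whiteheadGraph g y :=
  fun _ _ hab => ⟨hab.1, hab.2.imp (·.trans h) (·.trans h)⟩

theorem not_hasCutVertex_of_infix {x y : List (Letter g)} (h : x <:+: y)
    (hx : ¬ HasCutVertex (whiteheadGraph g x)) : ¬ HasCutVertex (whiteheadGraph g y) := by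
  simp only [HasCutVertex, not_or, not_exists, not_not] at hx ⊢
  exact ⟨hx.1.mono (whiteheadGraph_mono h),
    fun v => (hx.2 v).mono fun _ _ hab => whiteheadGraph_mono h hab⟩

theorem whiteheadGraph_nil : whiteheadGraph g [] = ⊥ := by
  ext a b
  simp [whiteheadGraph]

theorem not_connected_bot_letter : ¬ (⊥ : SimpleGraph (Letter g)).Connected := by
  intro h
  obtain ⟨a⟩ := h.nonempty
  simpa [Prod.ext_iff] using SimpleGraph.reachable_bot.mp (h.preconnected a (a.1, !a.2))

theorem ne_nil_of_not_hasCutVertex {x : List (Letter g)}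
    (hx : ¬ HasCutVertex (whiteheadGraph g x)) : x ≠ [] := by
  rintro rfl
  exact hx (Or.inl (whiteheadGraph_nil ▸ not_connected_bot_letter))

theorem simpleLength_le_of_forall {w : List (Letter g)} {n : ℕ}
    (h : ∀ ws : List (List (Letter g)), ws.flatten = w →
      (∀ x ∈ ws, ¬ HasCutVertex (whiteheadGraph g x)) → ws.length ≤ n) :
    simpleLength g w ≤ n := by
  unfold simpleLength
  split_ifs with hw
  · exact n.zero_le
  · refine csSup_le ⟨1, [w], rfl, List.flatten_singleton, by simpa using hw⟩ ?_
    rintro _ ⟨ws, rfl, hflat, hpieces⟩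
    exact h ws hflat hpieces

theorem length_le_simpleLength {w : List (Letter g)} {ws : List (List (Letter g))}
    (hflat : ws.flatten = w) (hpieces : ∀ x ∈ ws, ¬ HasCutVertex (whiteheadGraph g x)) :
    ws.length ≤ simpleLength g w := by
  rcases ws with _ | ⟨hd, tl⟩
  · exact Nat.zero_le _
  have hw : ¬ HasCutVertex (whiteheadGraph g w) :=
    not_hasCutVertex_of_infix ⟨[], tl.flatten, by simp [← hflat]⟩ (hpieces hd List.mem_cons_self)
  rw [simpleLength, if_neg hw]
  refine le_csSup ⟨w.length, ?_⟩ ⟨_, rfl, hflat, hpieces⟩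
  rintro _ ⟨ws', rfl, rfl, hpieces'⟩
  exact List.length_le_length_flatten fun x hx => ne_nil_of_not_hasCutVertex (hpieces' x hx)

theorem length_le_simpleLength_of_infix {w : List (Letter g)} {ws : List (List (Letter g))}
    (hws : ws.flatten <:+: w) (hpieces : ∀ x ∈ ws, ¬ HasCutVertex (whiteheadGraph g x)) :
    ws.length ≤ simpleLength g w := by
  obtain rfl | hne := eq_or_ne ws []
  · exact Nat.zero_le _
  obtain ⟨ws', hlen, hflat, hws'⟩ := List.exists_flatten_eq_of_flatten_infix hws hne
  refine hlen ▸ length_le_simpleLength hflat fun y hy => ?_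
  obtain ⟨x, hx, hxy⟩ := hws' y hy
  exact not_hasCutVertex_of_infix hxy (hpieces x hx)

end Whitehead

theorem simpleLength_mul_le_general (g : ℕ)
    (u v : List (Letter g)) (hu : IsReducedWord u) (hv : IsReducedWord v) :
    simpleLength g (FreeGroup.reduce (u ++ v)) ≤
      simpleLength g u + simpleLength g v + 1 := by
  obtain ⟨u₁, v₁, hu₁, hv₁, hw⟩ := (FreeGroup.IsReduced.of_reduce_eq hu).exists_reduce_append_eq
    (FreeGroup.IsReduced.of_reduce_eq hv)
  refine simpleLength_le_of_forall fun ws hflat hpieces => ?_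
  obtain ⟨i, hpre, hsuf⟩ := List.exists_take_flatten_prefix_drop_flatten_suffix (hflat.trans hw)
  have hle_u : (ws.take i).length ≤ simpleLength g u :=
    length_le_simpleLength_of_infix (hpre.trans hu₁).isInfix
      fun x hx => hpieces x (List.mem_of_mem_take hx)
  have hle_v : (ws.drop (i + 1)).length ≤ simpleLength g v :=
    length_le_simpleLength_of_infix (hsuf.trans hv₁).isInfix
      fun x hx => hpieces x (List.mem_of_mem_drop hx)
  have hsplit : ws.length ≤ (ws.take i).length + (ws.drop (i + 1)).length + 1 := by
    simp only [List.length_take, List.length_drop]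
    omega
  omega

/-- If `u, v` are freely reduced words and `w` is the unique reduced word representing the
element `uv` of `F_g`, then `|w|ₛ ≤ |u|ₛ + |v|ₛ + 1`. -/
theorem simpleLength_mul_le (g : ℕ) (hg : 2 ≤ g)
    (u v : List (Letter g)) (hu : IsReducedWord u) (hv : IsReducedWord v) :
    simpleLength g (FreeGroup.reduce (u ++ v)) ≤
      simpleLength g u + simpleLength g v + 1 :=
  simpleLength_mul_le_general g u v hu hv
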